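/- arXiv:2505.01047 — 2 statements merged into one kernel-verified Lean document; each statement's English description precedes it below -/
import Mathlib

section
/- Let X and Z be real Banach spaces, u ∈ X, R₀ > 0, and let F : X → Z be Fréchet differentiable on B(u,R₀) with derivative DF Lipschitz on B(u,R₀) with constant L > 0. Assume F(u) = 0 and DF(u) ≠ 0. Then for every û ∈ X with ‖û − u‖ < min(R₀, 2‖DF(u)‖ / L), one has the lower a posteriori error bound (1/2)‖DF(u)‖⁻¹ ‖F(û)‖ ≤ ‖u − û‖, where ‖DF(u)‖ is the operator norm of DF(u). -/
/-!
Write `û = u + h`. Since `DF` is `L`-Lipschitz, the first-order Taylor remainder satisfies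
`‖F û - F u - DF u h‖ ≤ (L / 2) ‖h‖²`, and `L ‖h‖ ≤ 2 ‖DF u‖` turns this into
`‖F û‖ ≤ ‖DF u‖ ‖h‖ + (L / 2) ‖h‖² ≤ 2 ‖DF u‖ ‖h‖`.
-/

theorem Convex.norm_image_sub_sub_fderiv_le_of_lipschitz {E G : Type*}
    [NormedAddCommGroup E] [NormedSpace ℝ E] [NormedAddCommGroup G] [NormedSpace ℝ G]
    {s : Set E} (hs : Convex ℝ s)
    {f : E → G} {f' : E → E →L[ℝ] G} {L : ℝ} {x y : E}
    (hf : ∀ z ∈ s, HasFDerivAt f (f' z) z)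
    (hlip : ∀ z ∈ s, ‖f' z - f' x‖ ≤ L * ‖z - x‖) (hx : x ∈ s) (hy : y ∈ s) :
    ‖f y - f x - f' x (y - x)‖ ≤ L / 2 * ‖y - x‖ ^ 2 := by
  set h := y - x
  have hseg : ∀ t ∈ Set.Icc (0 : ℝ) 1, x + t • h ∈ s := fun t ht => hs.add_smul_sub_mem hx hy ht
  set g : ℝ → G := fun t => f (x + t • h) - f x - t • f' x h
  have hg : ∀ t ∈ Set.Icc (0 : ℝ) 1, HasDerivAt g (f' (x + t • h) h - f' x h) t := by
    intro t ht
    have hline : HasDerivAt (fun t : ℝ => x + t • h) h t := by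
      simpa using ((hasDerivAt_id t).smul_const h).const_add x
    exact ((((hf _ (hseg t ht)).comp_hasDerivAt t hline).sub_const (f x)).sub
      ((hasDerivAt_id t).smul_const (f' x h))).congr_deriv (by rw [one_smul])
  have hg_bound : ∀ t ∈ Set.Ico (0 : ℝ) 1, ‖f' (x + t • h) h - f' x h‖ ≤ L * ‖h‖ ^ 2 * t := by
    intro t ht
    calc ‖f' (x + t • h) h - f' x h‖ = ‖(f' (x + t • h) - f' x) h‖ := rfl
      _ ≤ ‖f' (x + t • h) - f' x‖ * ‖h‖ := ContinuousLinearMap.le_opNorm _ _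
      _ ≤ L * ‖x + t • h - x‖ * ‖h‖ := by gcongr; exact hlip _ (hseg t (Set.Ico_subset_Icc_self ht))
      _ = L * ‖h‖ ^ 2 * t := by
        rw [add_sub_cancel_left, norm_smul, Real.norm_of_nonneg ht.1]; ring
  have hB : ∀ t : ℝ, HasDerivAt (fun t => L * ‖h‖ ^ 2 * (t ^ 2 / 2)) (L * ‖h‖ ^ 2 * t) t := by
    intro t
    simpa using ((hasDerivAt_pow 2 t).div_const 2).const_mul (L * ‖h‖ ^ 2)
  have hg_one := image_norm_le_of_norm_deriv_right_le_deriv_boundary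
    (fun t ht => (hg t ht).continuousAt.continuousWithinAt)
    (fun t ht => (hg t (Set.Ico_subset_Icc_self ht)).hasDerivWithinAt)
    (by simp [g]) hB hg_bound (Set.right_mem_Icc.mpr zero_le_one)
  simp only [g, one_smul, add_sub_cancel, h] at hg_one
  linarith

theorem lower_a_posteriori_bound_general
    {X Z : Type*} [NormedAddCommGroup X] [NormedSpace ℝ X]
    [NormedAddCommGroup Z] [NormedSpace ℝ Z]
    (u : X) (R₀ : ℝ) (F : X → Z) (DF : X → X →L[ℝ] Z)
    (L : ℝ) (hL : 0 < L)
    (hdiff : ∀ v ∈ Metric.ball u R₀, HasFDerivAt F (DF v) v)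
    (hlip : ∀ v ∈ Metric.ball u R₀, ∀ w ∈ Metric.ball u R₀,
      ‖DF v - DF w‖ ≤ L * ‖v - w‖)
    (hFu : F u = 0) :
    ∀ uhat : X, ‖uhat - u‖ < min R₀ (2 * ‖DF u‖ / L) →
      (1 / 2) * ‖DF u‖⁻¹ * ‖F uhat‖ ≤ ‖u - uhat‖ := by
  intro uhat hclose
  obtain ⟨hR, hsmall⟩ := lt_min_iff.1 hclose
  replace hsmall : L * ‖uhat - u‖ ≤ 2 * ‖DF u‖ := by
    rw [lt_div_iff₀ hL] at hsmall; linarith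
  have hu : u ∈ Metric.ball u R₀ := Metric.mem_ball_self ((norm_nonneg _).trans_lt hR)
  have hremainder : ‖F uhat - DF u (uhat - u)‖ ≤ L / 2 * ‖uhat - u‖ ^ 2 := by
    simpa [hFu] using (convex_ball u R₀).norm_image_sub_sub_fderiv_le_of_lipschitz hdiff
      (fun v hv => hlip v hv u hu) hu (mem_ball_iff_norm.2 hR)
  have hresidual : ‖F uhat‖ ≤ 2 * ‖DF u‖ * ‖u - uhat‖ := by
    rw [norm_sub_rev u]
    calc ‖F uhat‖ ≤ ‖DF u (uhat - u)‖ + ‖F uhat - DF u (uhat - u)‖ := norm_le_insert' _ _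
      _ ≤ ‖DF u‖ * ‖uhat - u‖ + L / 2 * ‖uhat - u‖ ^ 2 :=
        add_le_add ((DF u).le_opNorm _) hremainder
      _ ≤ 2 * ‖DF u‖ * ‖uhat - u‖ := by nlinarith [norm_nonneg (uhat - u)]
  rw [one_div, ← mul_inv]
  exact inv_mul_le_of_le_mul₀ (by positivity) (norm_nonneg _) hresidual

/-- Lower a posteriori error bound (left inequality of Theorem 1 of the appendix):
if `F u = 0`, `DF u ≠ 0`, and `DF` is Lipschitz with constant `L > 0` on `B(u, R₀)`,
then for every `uhat` with `‖uhat - u‖ < min (R₀, 2‖DF u‖ / L)` one has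
`(1/2) ‖DF u‖⁻¹ ‖F uhat‖ ≤ ‖u - uhat‖`. -/
theorem lower_a_posteriori_bound
    {X Z : Type*} [NormedAddCommGroup X] [NormedSpace ℝ X] [CompleteSpace X]
    [NormedAddCommGroup Z] [NormedSpace ℝ Z] [CompleteSpace Z]
    (u : X) (R₀ : ℝ) (hR₀ : 0 < R₀) (F : X → Z) (DF : X → X →L[ℝ] Z)
    (L : ℝ) (hL : 0 < L)
    (hdiff : ∀ v ∈ Metric.ball u R₀, HasFDerivAt F (DF v) v)
    (hlip : ∀ v ∈ Metric.ball u R₀, ∀ w ∈ Metric.ball u R₀,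
      ‖DF v - DF w‖ ≤ L * ‖v - w‖)
    (hFu : F u = 0) (hDFu : DF u ≠ 0) :
    ∀ uhat : X, ‖uhat - u‖ < min R₀ (2 * ‖DF u‖ / L) →
      (1 / 2) * ‖DF u‖⁻¹ * ‖F uhat‖ ≤ ‖u - uhat‖ :=
  lower_a_posteriori_bound_general u R₀ F DF L hL hdiff hlip hFu
end

section
/- Let X and Z be real Banach spaces, u ∈ X, R₀ > 0, and let F : X → Z be Fréchet differentiable on B(u,R₀) with derivative DF Lipschitz on B(u,R₀) with constant L > 0. Assume F(u) = 0 and that DF(u) is a continuous linear isomorphism of X onto Z with continuous inverse DF(u)⁻¹. Then for every û ∈ X with ‖û − u‖ < min(R₀, 1 / (L‖DF(u)⁻¹‖)), one has the upper a posteriori error bound ‖u − û‖ ≤ 2‖DF(u)⁻¹‖ ‖F(û)‖, where ‖DF(u)⁻¹‖ is the operator norm of the inverse map. -/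
/-!
Write `h = û - u` and `η = ‖DF(u)⁻¹‖`. Since `F u = 0`, the Taylor remainder estimate for a
function with Lipschitz derivative gives `‖DF(u) h‖ ≤ ‖F û‖ + (L / 2) ‖h‖²`, hence
`‖h‖ ≤ η ‖F û‖ + (L η ‖h‖) ‖h‖ / 2`. The smallness condition `L η ‖h‖ < 1` lets the quadratic
term be absorbed into the left-hand side, at the cost of the factor `2`.
-/

open Set Metric

theorem Convex.norm_image_sub_sub_fderiv_le_half_mul_sq
    {X Z : Type*} [NormedAddCommGroup X] [NormedSpace ℝ X]
    [NormedAddCommGroup Z] [NormedSpace ℝ Z]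
    {s : Set X} (hs : Convex ℝ s) {F : X → Z} {DF : X → X →L[ℝ] Z} {L : ℝ} {x y : X}
    (hF : ∀ v ∈ s, HasFDerivAt F (DF v) v) (hDF : ∀ v ∈ s, ‖DF v - DF x‖ ≤ L * ‖v - x‖)
    (hx : x ∈ s) (hy : y ∈ s) :
    ‖F y - F x - DF x (y - x)‖ ≤ L / 2 * ‖y - x‖ ^ 2 := by
  set h := y - x
  have hseg : ∀ t ∈ Icc (0 : ℝ) 1, x + t • h ∈ s := fun t ht => hs.add_smul_sub_mem hx hy ht
  set g : ℝ → Z := fun t => F (x + t • h) - F x - t • DF x h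
  have hg : ∀ t ∈ Icc (0 : ℝ) 1, HasDerivAt g (DF (x + t • h) h - DF x h) t := by
    intro t ht
    have hline : HasDerivAt (fun t : ℝ => x + t • h) h t := by
      simpa using ((hasDerivAt_id t).smul_const h).const_add x
    have hlin : HasDerivAt (fun t : ℝ => t • DF x h) (DF x h) t := by
      simpa using (hasDerivAt_id t).smul_const (DF x h)
    exact (((hF _ (hseg t ht)).comp_hasDerivAt t hline).sub_const (F x)).sub hlin
  have hg' : ∀ t ∈ Ico (0 : ℝ) 1, ‖DF (x + t • h) h - DF x h‖ ≤ L * ‖h‖ ^ 2 * t := by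
    intro t ht
    calc ‖DF (x + t • h) h - DF x h‖ ≤ ‖DF (x + t • h) - DF x‖ * ‖h‖ :=
          (DF (x + t • h) - DF x).le_opNorm h
      _ ≤ L * ‖(x + t • h) - x‖ * ‖h‖ := by
          gcongr
          exact hDF _ (hseg t (Ico_subset_Icc_self ht))
      _ = L * ‖h‖ ^ 2 * t := by
          rw [add_sub_cancel_left, norm_smul, Real.norm_of_nonneg ht.1]; ring
  have hB : ∀ t : ℝ, HasDerivAt (fun t : ℝ => L * ‖h‖ ^ 2 / 2 * t ^ 2) (L * ‖h‖ ^ 2 * t) t :=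
    fun t => ((hasDerivAt_pow 2 t).const_mul (L * ‖h‖ ^ 2 / 2)).congr_deriv (by ring)
  have hg1 := image_norm_le_of_norm_deriv_right_le_deriv_boundary
    (fun t ht => (hg t ht).continuousAt.continuousWithinAt)
    (fun t ht => (hg t (Ico_subset_Icc_self ht)).hasDerivWithinAt) (by simp [g]) hB hg'
    (right_mem_Icc.2 zero_le_one)
  simp only [g, one_smul, one_pow, mul_one, show x + h = y from add_sub_cancel x y] at hg1
  linarith

theorem upper_a_posteriori_bound_general
    {X Z : Type*} [NormedAddCommGroup X] [NormedSpace ℝ X]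
    [NormedAddCommGroup Z] [NormedSpace ℝ Z]
    (u : X) (R₀ : ℝ) (hR₀ : 0 < R₀) (F : X → Z) (DF : X → X →L[ℝ] Z)
    (L : ℝ)
    (hdiff : ∀ v ∈ Metric.ball u R₀, HasFDerivAt F (DF v) v)
    (hlip : ∀ v ∈ Metric.ball u R₀, ∀ w ∈ Metric.ball u R₀,
      ‖DF v - DF w‖ ≤ L * ‖v - w‖)
    (hFu : F u = 0)
    (e : X ≃L[ℝ] Z) (he : (e : X →L[ℝ] Z) = DF u) :
    ∀ uhat : X, ‖uhat - u‖ < min R₀ (1 / (L * ‖(e.symm : Z →L[ℝ] X)‖)) →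
      ‖u - uhat‖ ≤ 2 * ‖(e.symm : Z →L[ℝ] X)‖ * ‖F uhat‖ := by
  intro uhat hlt
  set η := ‖(e.symm : Z →L[ℝ] X)‖
  have hball : uhat ∈ ball u R₀ := mem_ball_iff_norm.2 (hlt.trans_le (min_le_left _ _))
  have hsmall : L * η * ‖uhat - u‖ < 1 := by
    have h1 := hlt.trans_le (min_le_right _ _)
    have hpos : 0 < L * η := one_div_pos.1 ((norm_nonneg _).trans_lt h1)
    exact (lt_div_iff₀' hpos).1 h1
  have htaylor : ‖F uhat - DF u (uhat - u)‖ ≤ L / 2 * ‖uhat - u‖ ^ 2 := by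
    simpa [hFu] using (convex_ball u R₀).norm_image_sub_sub_fderiv_le_half_mul_sq hdiff
      (fun v hv => hlip v hv u (mem_ball_self hR₀)) (mem_ball_self hR₀) hball
  have hinv : ‖uhat - u‖ ≤ η * ‖DF u (uhat - u)‖ := by
    simpa [← he] using (e.symm : Z →L[ℝ] X).le_opNorm (e (uhat - u))
  have hlinear : ‖DF u (uhat - u)‖ ≤ ‖F uhat‖ + L / 2 * ‖uhat - u‖ ^ 2 := by
    have := norm_le_insert' (DF u (uhat - u)) (F uhat)
    rw [norm_sub_rev] at this
    linarith
  have habsorb : ‖uhat - u‖ ≤ η * ‖F uhat‖ + ‖uhat - u‖ / 2 := by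
    calc ‖uhat - u‖ ≤ η * (‖F uhat‖ + L / 2 * ‖uhat - u‖ ^ 2) :=
          hinv.trans (by gcongr)
      _ = η * ‖F uhat‖ + (L * η * ‖uhat - u‖) * ‖uhat - u‖ / 2 := by ring
      _ ≤ η * ‖F uhat‖ + ‖uhat - u‖ / 2 := by gcongr; nlinarith [norm_nonneg (uhat - u)]
  rw [norm_sub_rev]
  linarith

/-- Upper a posteriori error bound (right inequality of Theorem 1 of the appendix):
if `F u = 0` and `DF u` is a continuous linear isomorphism `e : X ≃L[ℝ] Z`, with `DF`
Lipschitz with constant `L > 0` on `B(u, R₀)`, then for every `uhat` with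
`‖uhat - u‖ < min (R₀, 1 / (L ‖e.symm‖))` one has `‖u - uhat‖ ≤ 2 ‖e.symm‖ ‖F uhat‖`. -/
theorem upper_a_posteriori_bound
    {X Z : Type*} [NormedAddCommGroup X] [NormedSpace ℝ X] [CompleteSpace X]
    [NormedAddCommGroup Z] [NormedSpace ℝ Z] [CompleteSpace Z]
    (u : X) (R₀ : ℝ) (hR₀ : 0 < R₀) (F : X → Z) (DF : X → X →L[ℝ] Z)
    (L : ℝ) (hL : 0 < L)
    (hdiff : ∀ v ∈ Metric.ball u R₀, HasFDerivAt F (DF v) v)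
    (hlip : ∀ v ∈ Metric.ball u R₀, ∀ w ∈ Metric.ball u R₀,
      ‖DF v - DF w‖ ≤ L * ‖v - w‖)
    (hFu : F u = 0)
    (e : X ≃L[ℝ] Z) (he : (e : X →L[ℝ] Z) = DF u) :
    ∀ uhat : X, ‖uhat - u‖ < min R₀ (1 / (L * ‖(e.symm : Z →L[ℝ] X)‖)) →
      ‖u - uhat‖ ≤ 2 * ‖(e.symm : Z →L[ℝ] X)‖ * ‖F uhat‖ :=
  upper_a_posteriori_bound_general u R₀ hR₀ F DF L hdiff hlip hFu e he
end
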